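/- arXiv:2602.23296 — 2 statements merged into one kernel-verified Lean document; each statement's English description precedes it below -/
import Mathlib

section
/- Let F_1, ..., F_M : ℝ → ℝ be differentiable functions with 0 ≤ F_k'(x) ≤ L on an interval I, let w_k ≥ 0 sum to 1, let F_mix = ∑_k w_k F_k, and assume F_mix'(x) ≥ c > 0 on I with 0 < c ≤ L. Suppose q_mix ∈ I satisfies F_mix(q_mix) = 1 - α, each q_k ∈ I satisfies F_k(q_k) = 1 - α, and q_avg = ∑_k w_k q_k lies in I. Then |q_avg - q_mix| ≤ (L/c) ∑_{j=1}^M ∑_{k=1}^M w_j w_k |q_j - q_k|. -/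
open Finset

/-- Proposition 2: stability bound for quantile aggregation. -/
theorem quantile_aggregation_stability {M : ℕ}
    (F : Fin M → ℝ → ℝ) (w : Fin M → ℝ) (L c α : ℝ)
    (I : Set ℝ) (hI : I.OrdConnected)
    (q : Fin M → ℝ) (qmix : ℝ)
    (hw : ∀ k, 0 ≤ w k) (hsum : ∑ k, w k = 1)
    (hdiff : ∀ k, Differentiable ℝ (F k))
    (hderiv : ∀ k, ∀ x ∈ I, 0 ≤ deriv (F k) x ∧ deriv (F k) x ≤ L)
    (hc : 0 < c) (hcL : c ≤ L)
    (hmixderiv : ∀ x ∈ I, c ≤ deriv (fun y => ∑ k, w k * F k y) x)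
    (hqmix : qmix ∈ I) (hFmix : ∑ k, w k * F k qmix = 1 - α)
    (hqk : ∀ k, q k ∈ I) (hFk : ∀ k, F k (q k) = 1 - α)
    (havg : (∑ k, w k * q k) ∈ I) :
    |(∑ k, w k * q k) - qmix| ≤ (L / c) * ∑ j, ∑ k, w j * w k * |q j - q k| := by
  set qavg := ∑ k, w k * q k with hqavg
  set Fmix : ℝ → ℝ := fun y => ∑ k, w k * F k y with hFmixdef
  have hconv : Convex ℝ I := hI.convex
  have hFmixdiff : Differentiable ℝ Fmix := by
    apply Differentiable.fun_sum
    intro k _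
    exact (hdiff k).const_mul (w k)
  -- strong monotonicity: c * |qavg - qmix| ≤ |Fmix qavg - Fmix qmix|
  have key : ∀ x ∈ I, ∀ y ∈ I, x ≤ y → c * (y - x) ≤ Fmix y - Fmix x := by
    intro x hx y hy hxy
    exact hconv.mul_sub_le_image_sub_of_le_deriv hFmixdiff.continuous.continuousOn
      hFmixdiff.differentiableOn
      (fun z hz => hmixderiv z (interior_subset hz)) x hx y hy hxy
  have hlow : c * |qavg - qmix| ≤ |Fmix qavg - Fmix qmix| := by
    rcases le_total qavg qmix with h | h
    · have h2 := key qavg havg qmix hqmix h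
      rw [abs_sub_comm qavg qmix, abs_of_nonneg (by linarith), abs_sub_comm]
      calc c * (qmix - qavg) ≤ Fmix qmix - Fmix qavg := h2
        _ ≤ |Fmix qmix - Fmix qavg| := le_abs_self _
    · have h2 := key qmix hqmix qavg havg h
      rw [abs_of_nonneg (by linarith)]
      calc c * (qavg - qmix) ≤ Fmix qavg - Fmix qmix := h2
        _ ≤ |Fmix qavg - Fmix qmix| := le_abs_self _
  have hL0 : 0 ≤ L := le_trans hc.le hcL
  -- Lipschitz bound for each F k on I
  have hlip : ∀ k, ∀ x ∈ I, ∀ y ∈ I, |F k y - F k x| ≤ L * |y - x| := by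
    intro k x hx y hy
    have h3 := Convex.norm_image_sub_le_of_norm_deriv_le
      (f := F k) (s := I) (C := L)
      (fun z _ => (hdiff k).differentiableAt)
      (fun z hz => by
        rw [Real.norm_eq_abs, abs_of_nonneg (hderiv k z hz).1]
        exact (hderiv k z hz).2) hconv hx hy
    simpa [Real.norm_eq_abs] using h3
  -- rewrite the difference as a weighted sum
  have hdiff1 : Fmix qavg - Fmix qmix = ∑ k, w k * (F k qavg - F k (q k)) := by
    have h4 : ∑ k, w k * (F k qavg - F k (q k))
        = (∑ k, w k * F k qavg) - (∑ k, w k * F k (q k)) := by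
      rw [← Finset.sum_sub_distrib]; congr 1; ext k; ring
    have h5 : ∑ k, w k * F k (q k) = 1 - α := by
      simp only [hFk, ← Finset.sum_mul, hsum, one_mul]
    rw [h4, h5, hFmixdef]
    simp only [hFmix]
  -- bound |qavg - q k|
  have hqb : ∀ k, |qavg - q k| ≤ ∑ j, w j * |q j - q k| := by
    intro k
    have h6 : qavg - q k = ∑ j, w j * (q j - q k) := by
      simp only [mul_sub, Finset.sum_sub_distrib, ← Finset.sum_mul, hsum, one_mul, hqavg]
    rw [h6]
    calc |∑ j, w j * (q j - q k)| ≤ ∑ j, |w j * (q j - q k)| :=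
          Finset.abs_sum_le_sum_abs _ _
      _ = ∑ j, w j * |q j - q k| := by
          congr 1; ext j; rw [abs_mul, abs_of_nonneg (hw j)]
  -- combine
  have hmain : c * |qavg - qmix| ≤ L * ∑ j, ∑ k, w j * w k * |q j - q k| := by
    calc c * |qavg - qmix| ≤ |Fmix qavg - Fmix qmix| := hlow
      _ = |∑ k, w k * (F k qavg - F k (q k))| := by rw [hdiff1]
      _ ≤ ∑ k, |w k * (F k qavg - F k (q k))| := Finset.abs_sum_le_sum_abs _ _
      _ = ∑ k, w k * |F k qavg - F k (q k)| := by
          congr 1; ext k; rw [abs_mul, abs_of_nonneg (hw k)]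
      _ ≤ ∑ k, w k * (L * ∑ j, w j * |q j - q k|) := by
          apply Finset.sum_le_sum
          intro k _
          apply mul_le_mul_of_nonneg_left _ (hw k)
          calc |F k qavg - F k (q k)| ≤ L * |qavg - q k| :=
                hlip k (q k) (hqk k) qavg havg
            _ ≤ L * ∑ j, w j * |q j - q k| :=
                mul_le_mul_of_nonneg_left (hqb k) hL0
      _ = ∑ k, ∑ j, L * (w j * w k * |q j - q k|) := by
          refine Finset.sum_congr rfl fun k _ => ?_
          rw [Finset.mul_sum, Finset.mul_sum]
          refine Finset.sum_congr rfl fun j _ => ?_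
          ring
      _ = ∑ j, ∑ k, L * (w j * w k * |q j - q k|) := Finset.sum_comm
      _ = L * ∑ j, ∑ k, w j * w k * |q j - q k| := by
          rw [Finset.mul_sum]
          refine Finset.sum_congr rfl fun j _ => ?_
          rw [Finset.mul_sum]
  rw [div_mul_eq_mul_div, le_div_iff₀ hc]
  calc |qavg - qmix| * c = c * |qavg - qmix| := by ring
    _ ≤ L * ∑ j, ∑ k, w j * w k * |q j - q k| := hmain
end

section
/- Let V_1, ..., V_n be exchangeable real-valued random variables and let V_{n+1} be such that (V_1, ..., V_{n+1}) is exchangeable. Let q̂ be the ⌈(n+1)(1-α)⌉-th order statistic of V_1, ..., V_n, where α ∈ (0,1) with ⌈(n+1)(1-α)⌉ ≤ n. Then P(V_{n+1} ≤ q̂) ≥ 1 - α. -/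
open MeasureTheory ENNReal

/-- The `k`-th order statistic (1-indexed) of the values `v 0, ..., v (n-1)`. -/
noncomputable def orderStat {n : ℕ} (v : Fin n → ℝ) (k : ℕ) : ℝ :=
  (Multiset.sort (Multiset.ofList (List.ofFn v)) (· ≤ ·)).getD (k - 1) 0

lemma sorted_le_getElem_iff {l : List ℝ} (hl : l.Pairwise (· ≤ ·)) {idx : ℕ} (h : idx < l.length) (t : ℝ) :
    t ≤ l[idx] ↔ l.countP (fun x => decide (x < t)) ≤ idx := by
  constructor
  · intro ht
    have hsplit : l.countP (fun x => decide (x < t)) =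
        (l.take idx).countP (fun x => decide (x < t)) + (l.drop idx).countP (fun x => decide (x < t)) := by
      rw [← List.countP_append, List.take_append_drop]
    have hdrop : (l.drop idx).countP (fun x => decide (x < t)) = 0 := by
      rw [List.countP_eq_zero]
      intro a ha
      rw [List.mem_drop_iff_getElem] at ha
      obtain ⟨i, hi, rfl⟩ := ha
      simp only [decide_eq_true_eq]
      push_neg
      calc t ≤ l[idx] := ht
        _ ≤ l[idx + i] := by
          have := hl.rel_get_of_le (a := ⟨idx, h⟩) (b := ⟨idx + i, by omega⟩) (by simp)
          simpa using this
    have := List.countP_le_length (l := l.take idx) (p := fun x => decide (x < t))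
    rw [List.length_take] at this
    omega
  · intro hc
    by_contra ht
    push_neg at ht
    have htake : (l.take (idx+1)).countP (fun x => decide (x < t)) = (l.take (idx+1)).length := by
      rw [List.countP_eq_length]
      intro a ha
      rw [List.mem_take_iff_getElem] at ha
      obtain ⟨i, hi, rfl⟩ := ha
      simp only [decide_eq_true_eq]
      calc l[i] ≤ l[idx] := by
            have := hl.rel_get_of_le (a := ⟨i, by omega⟩) (b := ⟨idx, h⟩) (by simp; omega)
            simpa using this
        _ < t := ht
    have hle : (l.take (idx+1)).countP (fun x => decide (x < t)) ≤ l.countP (fun x => decide (x < t)) := by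
      conv_rhs => rw [← List.take_append_drop (idx+1) l, List.countP_append]
      omega
    rw [List.length_take] at htake
    omega

lemma countP_sort_ofFn {n:ℕ} (v : Fin n → ℝ) (t : ℝ) :
    (Multiset.sort (Multiset.ofList (List.ofFn v)) (· ≤ ·)).countP (fun x => decide (x < t))
      = (Finset.univ.filter fun i => v i < t).card := by
  rw [← Multiset.coe_countP (· < t)]
  rw [Multiset.sort_eq]
  have : (Multiset.ofList (List.ofFn v)) = Multiset.map v Finset.univ.val := by
    simp [List.ofFn_eq_map]
  rw [this, Multiset.countP_map]
  rw [Finset.card_def, Finset.filter_val]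

lemma le_orderStat_iff {n : ℕ} (v : Fin n → ℝ) (t : ℝ) {k : ℕ} (hk1 : 1 ≤ k) (hkn : k ≤ n) :
    t ≤ orderStat v k ↔ (Finset.univ.filter fun i => v i < t).card ≤ k - 1 := by
  set l := Multiset.sort (Multiset.ofList (List.ofFn v)) (· ≤ ·) with hl
  have hlen : l.length = n := by
    rw [hl, Multiset.length_sort]; simp
  have hidx : k - 1 < l.length := by omega
  have : orderStat v k = l[k-1] := by
    rw [orderStat, ← hl, List.getD_eq_getElem _ _ hidx]
  rw [this, sorted_le_getElem_iff (Multiset.pairwise_sort _ _) hidx, ← countP_sort_ofFn v t]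

lemma card_rank_le {n : ℕ} (w : Fin (n+1) → ℝ) {k : ℕ} (hk : k ≤ n+1) (hk1 : 1 ≤ k) :
    k ≤ (Finset.univ.filter fun j => (Finset.univ.filter fun i => w i < w j).card ≤ k - 1).card := by
  set σ := Tuple.sort w with hσ
  have hmono := Tuple.monotone_sort w
  have key : ∀ p : Fin (n+1), (p : ℕ) < k →
      (Finset.univ.filter fun i => w i < w (σ p)).card ≤ k - 1 := by
    intro p hp
    have hsub : (Finset.univ.filter fun i => w i < w (σ p)) ⊆
        Finset.image σ (Finset.univ.filter fun q => q < p) := by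
      intro i hi
      simp only [Finset.mem_filter, Finset.mem_univ, true_and] at hi
      rw [Finset.mem_image]
      refine ⟨σ⁻¹ i, ?_, by simp⟩
      simp only [Finset.mem_filter, Finset.mem_univ, true_and]
      by_contra hle
      push_neg at hle
      have := hmono hle
      simp only [Function.comp_apply, ← hσ, Equiv.Perm.inv_def, Equiv.apply_symm_apply] at this
      exact absurd hi (not_lt.mpr this)
    calc (Finset.univ.filter fun i => w i < w (σ p)).card
        ≤ (Finset.image σ (Finset.univ.filter fun q => q < p)).card := Finset.card_le_card hsub
      _ ≤ (Finset.univ.filter fun q => q < p).card := Finset.card_image_le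
      _ = (p : ℕ) := by
          have : (Finset.univ.filter fun q : Fin (n+1) => q < p) = Finset.Iio p := by
            ext q; simp
          rw [this, Fin.card_Iio]
      _ ≤ k - 1 := by omega
  have hinj : Function.Injective (fun p : Fin k => σ (Fin.castLE hk p)) := by
    intro a b hab
    have := σ.injective hab
    exact Fin.castLE_injective hk this
  have hmem : ∀ p : Fin k, p ∈ Finset.univ → σ (Fin.castLE hk p) ∈
      Finset.univ.filter fun j => (Finset.univ.filter fun i => w i < w j).card ≤ k - 1 := by
    intro p _
    simp only [Finset.mem_filter, Finset.mem_univ, true_and]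
    exact key (Fin.castLE hk p) (by simpa using p.isLt)
  have := Finset.card_le_card_of_injOn (fun p : Fin k => σ (Fin.castLE hk p)) hmem hinj.injOn
  have hcard : (Finset.univ : Finset (Fin k)).card = k := by simp
  omega

/-- Split conformal coverage guarantee: for exchangeable scores
`V_1, ..., V_{n+1}`, the probability that `V_{n+1}` is at most the
`⌈(n+1)(1-α)⌉`-th order statistic of the first `n` scores is at least `1 - α`. -/
theorem split_conformal_coverage {Ω : Type*} [MeasurableSpace Ω]
    (P : Measure Ω) (hP : IsProbabilityMeasure P)
    (n : ℕ) (V : Fin (n + 1) → Ω → ℝ) (hV : ∀ i, Measurable (V i))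
    (hexch : ∀ σ : Equiv.Perm (Fin (n + 1)),
      P.map (fun ω => fun i => V (σ i) ω) = P.map (fun ω => fun i => V i ω))
    (α : ℝ) (hα : α ∈ Set.Ioo (0 : ℝ) 1)
    (hk : ⌈((n : ℝ) + 1) * (1 - α)⌉₊ ≤ n) :
    1 - α ≤ (P {ω | V (Fin.last n) ω
        ≤ orderStat (fun i : Fin n => V i.castSucc ω) ⌈((n : ℝ) + 1) * (1 - α)⌉₊}).toReal := by
  classical
  obtain ⟨hα0, hα1⟩ := hα
  set k : ℕ := ⌈((n : ℝ) + 1) * (1 - α)⌉₊ with hkdef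
  have hk1 : 1 ≤ k := by
    rw [hkdef]
    rw [Nat.one_le_ceil_iff]
    have : (0:ℝ) < 1 - α := by linarith
    positivity
  -- the rank sets in sequence space
  set A : Fin (n+1) → Set (Fin (n+1) → ℝ) :=
    fun j => {x | (Finset.univ.filter fun i => x i < x j).card ≤ k - 1} with hA
  have hAmeas : ∀ j, MeasurableSet (A j) := by
    intro j
    have hf : Measurable (fun x : Fin (n+1) → ℝ => (Finset.univ.filter fun i => x i < x j).card) := by
      have : (fun x : Fin (n+1) → ℝ => (Finset.univ.filter fun i => x i < x j).card)
          = fun x => ∑ i : Fin (n+1), if x i < x j then 1 else 0 := by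
        funext x; exact Finset.card_filter _ _
      rw [this]
      refine Finset.measurable_sum _ (fun i _ => ?_)
      exact Measurable.ite (measurableSet_lt (measurable_pi_apply i) (measurable_pi_apply j))
        measurable_const measurable_const
    exact hf (MeasurableSet.of_discrete (s := Set.Iic (k-1)))
  set Φ : Ω → (Fin (n+1) → ℝ) := fun ω i => V i ω with hΦ
  have hΦmeas : Measurable Φ := measurable_pi_lambda _ (fun i => hV i)
  set E : Fin (n+1) → Set Ω := fun j => Φ ⁻¹' (A j) with hE
  have hEmeas : ∀ j, MeasurableSet (E j) := fun j => hΦmeas (hAmeas j)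
  -- equal probabilities by exchangeability
  have hEeq : ∀ j, P (E j) = P (E (Fin.last n)) := by
    intro j
    have hσ := hexch (Equiv.swap j (Fin.last n))
    set σ := Equiv.swap j (Fin.last n) with hσdef
    have hmeas2 : Measurable (fun ω => fun i => V (σ i) ω) :=
      measurable_pi_lambda _ (fun i => hV (σ i))
    have h1 : (P.map (fun ω => fun i => V (σ i) ω)) (A (Fin.last n))
        = (P.map Φ) (A (Fin.last n)) := by rw [hσ]
    rw [Measure.map_apply hmeas2 (hAmeas _), Measure.map_apply hΦmeas (hAmeas _)] at h1
    have h2 : (fun ω => fun i => V (σ i) ω) ⁻¹' (A (Fin.last n)) = E j := by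
      ext ω
      simp only [Set.mem_preimage, hA, Set.mem_setOf_eq, hE, hΦ]
      have hσlast : σ (Fin.last n) = j := Equiv.swap_apply_right _ _
      have hcard : (Finset.univ.filter fun i => V (σ i) ω < V (σ (Fin.last n)) ω).card
          = (Finset.univ.filter fun i => V i ω < V j ω).card := by
        apply Finset.card_equiv σ
        intro a
        simp [hσlast]
      rw [hcard]
    rw [h2] at h1
    exact h1
  -- pointwise counting bound
  have hpoint : ∀ ω, (k : ℝ≥0∞) ≤ ∑ j : Fin (n+1), (E j).indicator 1 ω := by
    intro ω
    have hsum : ∑ j : Fin (n+1), (E j).indicator (1 : Ω → ℝ≥0∞) ω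
        = ((Finset.univ.filter fun j => ω ∈ E j).card : ℝ≥0∞) := by
      rw [Finset.card_filter]
      push_cast
      refine Finset.sum_congr rfl (fun j _ => ?_)
      by_cases h : ω ∈ E j <;> simp [Set.indicator, h]
    rw [hsum]
    have := card_rank_le (fun i => V i ω) (k := k) (by omega) hk1
    have hsame : (Finset.univ.filter fun j => ω ∈ E j)
        = (Finset.univ.filter fun j =>
            (Finset.univ.filter fun i => V i ω < V j ω).card ≤ k - 1) := by
      ext j; simp [hE, hA, hΦ]
    rw [hsame]
    exact_mod_cast this
  -- integrate
  have hint : (k : ℝ≥0∞) ≤ (n+1) * P (E (Fin.last n)) := by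
    have h1 : (k : ℝ≥0∞) = ∫⁻ _, (k : ℝ≥0∞) ∂P := by
      rw [lintegral_const, measure_univ, mul_one]
    rw [h1]
    calc ∫⁻ _, (k : ℝ≥0∞) ∂P ≤ ∫⁻ ω, ∑ j : Fin (n+1), (E j).indicator 1 ω ∂P :=
          lintegral_mono hpoint
      _ = ∑ j : Fin (n+1), ∫⁻ ω, (E j).indicator 1 ω ∂P := by
          rw [lintegral_finset_sum]
          exact fun j _ => measurable_one.indicator (hEmeas j)
      _ = ∑ j : Fin (n+1), P (E j) := by
          refine Finset.sum_congr rfl (fun j _ => ?_)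
          exact lintegral_indicator_one (hEmeas j)
      _ = (n+1) * P (E (Fin.last n)) := by
          rw [Finset.sum_congr rfl (fun j _ => hEeq j)]
          simp [Finset.card_univ]
  -- identify the target event with E (last n)
  have hevent : {ω | V (Fin.last n) ω
      ≤ orderStat (fun i : Fin n => V i.castSucc ω) k} = E (Fin.last n) := by
    ext ω
    simp only [Set.mem_setOf_eq, hE, hA, Set.mem_preimage, hΦ]
    rw [le_orderStat_iff _ _ hk1 hk]
    have : (Finset.univ.filter fun i : Fin (n+1) => V i ω < V (Fin.last n) ω).card
        = (Finset.univ.filter fun i : Fin n => V i.castSucc ω < V (Fin.last n) ω).card := by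
      rw [Fin.univ_castSuccEmb]
      rw [Finset.filter_cons]
      rw [if_neg (lt_irrefl _)]
      rw [Finset.filter_map, Finset.card_map]
      rfl
    rw [this]
  rw [hevent]
  -- finish arithmetic
  have hfin : P (E (Fin.last n)) ≠ ⊤ := (measure_lt_top P _).ne
  have hreal : (k : ℝ) ≤ (n+1) * (P (E (Fin.last n))).toReal := by
    have := ENNReal.toReal_mono (by finiteness) hint
    simpa [ENNReal.toReal_mul, ENNReal.toReal_add] using this
  have hceil : ((n : ℝ) + 1) * (1 - α) ≤ (k : ℝ) := Nat.le_ceil _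
  have hn : (0:ℝ) < (n:ℝ) + 1 := by positivity
  exact (mul_le_mul_iff_right₀ hn).mp (hceil.trans hreal)
end
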